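/- Let ε₀ > 0 be sufficiently small, let K_L be sufficiently large, let h₀(ξ,η) = ξη + Σ_{i=3}^{d} Σ_{j=0}^{i} b_{i,j} ξ^{i−j} η^{j} with 100^d Σ|b_{i,j}| ≤ ε₀, and let ζ̄ = (ζ̄₁,ζ̄₂) ∈ [-2,2]² satisfy |ζ̄| > (2K_L)^{-1} and |ζ̄₁| ≥ |ζ̄₂|. Define P(ξ,η) = ∂₁h₀(ξ,η)·∂₂h₀(ζ̄) − ∂₂h₀(ξ,η)·∂₁h₀(ζ̄). Then for every (ξ,η) ∈ [-4,4]², one has |∂₂P(ξ,η)| ≥ 1/(4K_L) and |∂₂P(ξ,η)| ≥ (1/2)|∂₁P(ξ,η)|. -/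

import Mathlib

noncomputable section

/-- The normalized polynomial `h₀(ξ,η) = ξη + Σ_{i=3}^d Σ_{j=0}^i b_{i,j} ξ^{i-j} η^j`. -/
def hpoly0 (d : ℕ) (b : ℕ → ℕ → ℝ) (ξ η : ℝ) : ℝ :=
  ξ * η + ∑ i ∈ Finset.Icc 3 d, ∑ j ∈ Finset.range (i + 1), b i j * ξ ^ (i - j) * η ^ j

/-- Smallness of the higher order coefficients: `100^d Σ |b_{i,j}| ≤ ε₀`. -/
def CoeffSmall0 (d : ℕ) (ε₀ : ℝ) (b : ℕ → ℕ → ℝ) : Prop :=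
  100 ^ d * ∑ i ∈ Finset.Icc 3 d, ∑ j ∈ Finset.range (i + 1), |b i j| ≤ ε₀

/-- Partial derivative in the first variable. -/
def pd1 (g : ℝ → ℝ → ℝ) : ℝ → ℝ → ℝ := fun x y => deriv (fun s => g s y) x

/-- Partial derivative in the second variable. -/
def pd2 (g : ℝ → ℝ → ℝ) : ℝ → ℝ → ℝ := fun x y => deriv (fun t => g x t) y

/-! Write `h₀ = ξη + R`. Then `∂₂P = (1 + ∂₁₂R)·∂₂h₀(ζ̄) − ∂₂₂R·∂₁h₀(ζ̄)` and
`∂₁P = ∂₁₁R·∂₂h₀(ζ̄) − (1 + ∂₂₁R)·∂₁h₀(ζ̄)`. On `[-4,4]²` every monomial of a second derivative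
of `R` is at most `100^d` times its coefficient, so the second derivatives are at most `ε₀`.
Since `R` vanishes to third order and `|ζ̄₂| ≤ |ζ̄₁| ≤ 2`, likewise `|∇R(ζ̄)| ≤ ε₀|ζ̄₁|`; hence
`∂₂h₀(ζ̄) ≈ ζ̄₁` and `∂₁h₀(ζ̄) ≈ ζ̄₂`, giving `|∂₂P| ≥ ¾|ζ̄₁|` and `|∂₁P| ≤ ³⁄₂|ζ̄₁|`, while
`|ζ̄| ≤ ³⁄₂|ζ̄₁|`. -/

open Finset

section MonoSum

variable {ι : Type*} (s : Finset ι) (a : ι → ℝ) (n p q : ι → ℕ)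

-- Differentiation only multiplies the integer weights `n` by the exponents, so partial
-- derivatives of such sums are again such sums, with the same coefficients `a`.
def monoSum (x y : ℝ) : ℝ :=
  ∑ k ∈ s, a k * n k * x ^ p k * y ^ q k

theorem hasDerivAt_monoSum_fst (x y : ℝ) :
    HasDerivAt (monoSum s a n p q · y) (monoSum s a (n * p) (p - 1) q x y) x := by
  refine (HasDerivAt.fun_sum fun k _ =>
    (((hasDerivAt_pow (p k) x).const_mul (a k * n k)).mul_const (y ^ q k))).congr_deriv ?_
  refine sum_congr rfl fun k _ => ?_
  simp only [Pi.mul_apply, Pi.sub_apply, Pi.one_apply, Nat.cast_mul]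
  ring

theorem hasDerivAt_monoSum_snd (x y : ℝ) :
    HasDerivAt (monoSum s a n p q x ·) (monoSum s a (n * q) p (q - 1) x y) y := by
  refine (HasDerivAt.fun_sum fun k _ =>
    ((hasDerivAt_pow (q k) y).const_mul (a k * n k * x ^ p k))).congr_deriv ?_
  refine sum_congr rfl fun k _ => ?_
  simp only [Pi.mul_apply, Pi.sub_apply, Pi.one_apply, Nat.cast_mul]
  ring

theorem pd1_monoSum : pd1 (monoSum s a n p q) = monoSum s a (n * p) (p - 1) q :=
  funext fun x => funext fun y => (hasDerivAt_monoSum_fst s a n p q x y).deriv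

theorem pd2_monoSum : pd2 (monoSum s a n p q) = monoSum s a (n * q) p (q - 1) :=
  funext fun x => funext fun y => (hasDerivAt_monoSum_snd s a n p q x y).deriv

theorem abs_monoSum_le {r K x y : ℝ} (hx : |x| ≤ r) (hy : |y| ≤ r)
    (h : ∀ k ∈ s, n k * r ^ (p k + q k) ≤ K) :
    |monoSum s a n p q x y| ≤ (∑ k ∈ s, |a k|) * K := by
  rw [sum_mul]
  refine (abs_sum_le_sum_abs _ _).trans (sum_le_sum fun k hk => ?_)
  have hxy : |x| ^ p k * |y| ^ q k ≤ r ^ (p k + q k) := by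
    have hr : 0 ≤ r := (abs_nonneg x).trans hx
    rw [pow_add]
    gcongr
  calc |a k * n k * x ^ p k * y ^ q k| = |a k| * (n k * (|x| ^ p k * |y| ^ q k)) := by
        simp only [abs_mul, abs_pow, Nat.abs_cast]; ring
    _ ≤ |a k| * (n k * r ^ (p k + q k)) := by gcongr
    _ ≤ |a k| * K := by gcongr; exact h k hk

end MonoSum

theorem natCast_mul_four_pow_le_hundred_pow {n e i d : ℕ} (hn : n ≤ i * i) (he : e ≤ i)
    (hi : i ≤ d) : (n : ℝ) * 4 ^ e ≤ 100 ^ d := by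
  have hsq : i * i ≤ 25 ^ i := by
    have h5 : i ≤ 5 ^ i := (Nat.lt_pow_self (by norm_num)).le
    calc i * i ≤ 5 ^ i * 5 ^ i := Nat.mul_le_mul h5 h5
      _ = 25 ^ i := by rw [← mul_pow]; norm_num
  have hnat : n * 4 ^ e ≤ 100 ^ d :=
    calc n * 4 ^ e ≤ 25 ^ i * 4 ^ i :=
          Nat.mul_le_mul (hn.trans hsq) (Nat.pow_le_pow_right (by norm_num) he)
      _ = 100 ^ i := by rw [← mul_pow]; norm_num
      _ ≤ 100 ^ d := Nat.pow_le_pow_right (by norm_num) hi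
  exact_mod_cast hnat

theorem natCast_mul_pow_le_hundred_pow_mul {n e i d : ℕ} {ρ : ℝ} (hρ₀ : 0 ≤ ρ) (hρ : ρ ≤ 2)
    (hn : n ≤ i * i) (he₁ : 1 ≤ e) (he : e ≤ i) (hi : i ≤ d) :
    (n : ℝ) * ρ ^ e ≤ 100 ^ d * ρ := by
  obtain ⟨e, rfl⟩ := Nat.exists_eq_add_of_le' he₁
  calc (n : ℝ) * ρ ^ (e + 1) = n * ρ ^ e * ρ := by ring
    _ ≤ n * 4 ^ e * ρ := by gcongr; linarith
    _ ≤ 100 ^ d * ρ := by gcongr; exact natCast_mul_four_pow_le_hundred_pow hn (by omega) hi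

theorem abs_add_le_of_abs_le_mul {z₁ z₂ α ε : ℝ} (hα : |α| ≤ ε * |z₁|) (hz : |z₂| ≤ |z₁|) :
    |z₂ + α| ≤ (1 + ε) * |z₁| := by
  linarith [abs_add_le z₂ α]

section Perturbation

variable {z₁ z₂ α β u v ε : ℝ}

theorem le_abs_perturbed (hε : ε ≤ 1 / 100) (hα : |α| ≤ ε * |z₁|) (hβ : |β| ≤ ε * |z₁|)
    (hz : |z₂| ≤ |z₁|) (hu : |u| ≤ ε) (hv : |v| ≤ ε) :
    3 / 4 * |z₁| ≤ |(1 + u) * (z₁ + α) - v * (z₂ + β)| := by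
  have hε₀ : 0 ≤ ε := (abs_nonneg u).trans hu
  have hA := abs_add_le_of_abs_le_mul hα le_rfl
  have hB := abs_add_le_of_abs_le_mul hβ hz
  set ρ := α + (u * (z₁ + α) - v * (z₂ + β))
  have hρ : |ρ| ≤ ε * |z₁| + (ε * ((1 + ε) * |z₁|) + ε * ((1 + ε) * |z₁|)) :=
    calc |ρ| ≤ |α| + (|u| * |z₁ + α| + |v| * |z₂ + β|) := by
          rw [← abs_mul, ← abs_mul]; exact (abs_add_le _ _).trans (by gcongr; exact abs_sub _ _)
      _ ≤ _ := by gcongr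
  calc 3 / 4 * |z₁| ≤ |z₁| - |ρ| := by
        nlinarith [mul_nonneg hε₀ (abs_nonneg z₁), mul_le_mul_of_nonneg_right hε (abs_nonneg z₁)]
    _ ≤ |z₁ + ρ| := by simpa using abs_sub_abs_le_abs_sub z₁ (-ρ)
    _ = _ := by congr 1; ring

theorem abs_perturbed_le (hε : ε ≤ 1 / 100) (hα : |α| ≤ ε * |z₁|) (hβ : |β| ≤ ε * |z₁|)
    (hz : |z₂| ≤ |z₁|) (hu : |u| ≤ ε) (hv : |v| ≤ ε) :
    |u * (z₁ + α) - (1 + v) * (z₂ + β)| ≤ 3 / 2 * |z₁| := by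
  have hε₀ : 0 ≤ ε := (abs_nonneg u).trans hu
  have hA := abs_add_le_of_abs_le_mul hα le_rfl
  have hB := abs_add_le_of_abs_le_mul hβ hz
  calc _ ≤ |u| * |z₁ + α| + (|1| + |v|) * |z₂ + β| := by
        refine (abs_sub _ _).trans ?_
        rw [abs_mul, abs_mul]
        gcongr
        exact abs_add_le _ _
    _ ≤ ε * ((1 + ε) * |z₁|) + (1 + ε) * ((1 + ε) * |z₁|) := by rw [abs_one]; gcongr
    _ ≤ 3 / 2 * |z₁| := by
        nlinarith [mul_nonneg hε₀ (abs_nonneg z₁), mul_le_mul_of_nonneg_right hε (abs_nonneg z₁)]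

end Perturbation

section HPoly

variable (d : ℕ) (b : ℕ → ℕ → ℝ)

def hpolyIndex : Finset (Σ _ : ℕ, ℕ) :=
  (Icc 3 d).sigma fun i => range (i + 1)

theorem mem_hpolyIndex {d : ℕ} {k : Σ _ : ℕ, ℕ} :
    k ∈ hpolyIndex d ↔ 3 ≤ k.1 ∧ k.1 ≤ d ∧ k.2 ≤ k.1 := by
  simp only [hpolyIndex, mem_sigma, mem_Icc, mem_range]
  omega

def hpolyRem : ℝ → ℝ → ℝ :=
  monoSum (hpolyIndex d) (fun k => b k.1 k.2) 1 (fun k => k.1 - k.2) (fun k => k.2)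

theorem hpoly0_eq : hpoly0 d b = fun x y => x * y + hpolyRem d b x y := by
  funext x y
  simp only [hpoly0, hpolyRem, monoSum, hpolyIndex, sum_sigma, Pi.one_apply, Nat.cast_one, mul_one]

theorem sum_abs_hpolyIndex_mul_le {d : ℕ} {b : ℕ → ℕ → ℝ} {ε : ℝ} (hb : CoeffSmall0 d ε b) :
    (∑ k ∈ hpolyIndex d, |b k.1 k.2|) * 100 ^ d ≤ ε := by
  rw [hpolyIndex, sum_sigma, mul_comm]
  exact hb

theorem pd1_hpoly0 : pd1 (hpoly0 d b) = fun x y => y + pd1 (hpolyRem d b) x y := by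
  funext x y
  rw [hpoly0_eq]
  exact (((hasDerivAt_id x).mul_const y).add (hasDerivAt_monoSum_fst ..)).deriv.trans (by
    rw [hpolyRem, pd1_monoSum]; simp)

theorem pd2_hpoly0 : pd2 (hpoly0 d b) = fun x y => x + pd2 (hpolyRem d b) x y := by
  funext x y
  rw [hpoly0_eq]
  exact (((hasDerivAt_id y).const_mul x).add (hasDerivAt_monoSum_snd ..)).deriv.trans (by
    rw [hpolyRem, pd2_monoSum]; simp)

theorem pd2_gradient_combination (A B x y : ℝ) :
    pd2 (fun x y => pd1 (hpoly0 d b) x y * A - pd2 (hpoly0 d b) x y * B) x y =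
      (1 + pd2 (pd1 (hpolyRem d b)) x y) * A - pd2 (pd2 (hpolyRem d b)) x y * B := by
  simp only [pd1_hpoly0, pd2_hpoly0, hpolyRem, pd1_monoSum, pd2_monoSum]
  exact ((((hasDerivAt_id y).add (hasDerivAt_monoSum_snd ..)).mul_const A).sub
    (((hasDerivAt_const y x).add (hasDerivAt_monoSum_snd ..)).mul_const B)).deriv.trans (by simp)

theorem pd1_gradient_combination (A B x y : ℝ) :
    pd1 (fun x y => pd1 (hpoly0 d b) x y * A - pd2 (hpoly0 d b) x y * B) x y =
      pd1 (pd1 (hpolyRem d b)) x y * A - (1 + pd1 (pd2 (hpolyRem d b)) x y) * B := by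
  simp only [pd1_hpoly0, pd2_hpoly0, hpolyRem, pd1_monoSum, pd2_monoSum]
  exact ((((hasDerivAt_const x y).add (hasDerivAt_monoSum_fst ..)).mul_const A).sub
    (((hasDerivAt_id x).add (hasDerivAt_monoSum_fst ..)).mul_const B)).deriv.trans (by simp)

variable {d b} {ε : ℝ}

theorem abs_second_pd_hpolyRem_le (hb : CoeffSmall0 d ε b) {x y : ℝ} (hx : |x| ≤ 4)
    (hy : |y| ≤ 4) :
    |pd2 (pd1 (hpolyRem d b)) x y| ≤ ε ∧ |pd2 (pd2 (hpolyRem d b)) x y| ≤ ε ∧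
      |pd1 (pd1 (hpolyRem d b)) x y| ≤ ε ∧ |pd1 (pd2 (hpolyRem d b)) x y| ≤ ε := by
  simp only [hpolyRem, pd1_monoSum, pd2_monoSum]
  refine ⟨?_, ?_, ?_, ?_⟩ <;>
  · refine (abs_monoSum_le _ _ _ _ _ hx hy fun k hk => ?_).trans (sum_abs_hpolyIndex_mul_le hb)
    obtain ⟨-, hd, hj⟩ := mem_hpolyIndex.1 hk
    simp only [Pi.mul_apply, Pi.sub_apply, Pi.one_apply]
    exact natCast_mul_four_pow_le_hundred_pow (Nat.mul_le_mul (by omega) (by omega)) (by omega) hd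

theorem abs_pd_hpolyRem_le (hb : CoeffSmall0 d ε b) {z₁ z₂ : ℝ} (hz₁ : |z₁| ≤ 2)
    (hz : |z₂| ≤ |z₁|) :
    |pd1 (hpolyRem d b) z₁ z₂| ≤ ε * |z₁| ∧ |pd2 (hpolyRem d b) z₁ z₂| ≤ ε * |z₁| := by
  have hsum : (∑ k ∈ hpolyIndex d, |b k.1 k.2|) * (100 ^ d * |z₁|) ≤ ε * |z₁| := by
    rw [← mul_assoc]
    exact mul_le_mul_of_nonneg_right (sum_abs_hpolyIndex_mul_le hb) (abs_nonneg z₁)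
  simp only [hpolyRem, pd1_monoSum, pd2_monoSum]
  refine ⟨?_, ?_⟩ <;>
  · refine (abs_monoSum_le _ _ _ _ _ le_rfl hz fun k hk => ?_).trans hsum
    obtain ⟨h3, hd, hj⟩ := mem_hpolyIndex.1 hk
    simp only [Pi.mul_apply, Pi.sub_apply, Pi.one_apply]
    exact natCast_mul_pow_le_hundred_pow_mul (abs_nonneg z₁) hz₁
      (Nat.mul_le_mul (by omega) (by omega)) (by omega) (by omega) hd

end HPoly

theorem statement10_general (d : ℕ) :
    ∃ ε₀' > (0 : ℝ), ∀ ε₀ : ℝ, 0 < ε₀ → ε₀ ≤ ε₀' →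
      ∃ K₀ : ℝ, ∀ KL : ℝ, K₀ ≤ KL →
        ∀ b : ℕ → ℕ → ℝ, CoeffSmall0 d ε₀ b →
          ∀ z : ℝ × ℝ, z ∈ Set.Icc (-2 : ℝ) 2 ×ˢ Set.Icc (-2 : ℝ) 2 →
            (2 * KL)⁻¹ < Real.sqrt (z.1 ^ 2 + z.2 ^ 2) →
            |z.2| ≤ |z.1| →
            ∀ P : ℝ → ℝ → ℝ,
              P = (fun x y =>
                pd1 (hpoly0 d b) x y * pd2 (hpoly0 d b) z.1 z.2 -
                  pd2 (hpoly0 d b) x y * pd1 (hpoly0 d b) z.1 z.2) →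
              ∀ x y : ℝ, x ∈ Set.Icc (-4 : ℝ) 4 → y ∈ Set.Icc (-4 : ℝ) 4 →
                1 / (4 * KL) ≤ |pd2 P x y| ∧
                1 / 2 * |pd1 P x y| ≤ |pd2 P x y| := by
  refine ⟨1 / 100, by norm_num, fun ε _ hε => ⟨0, fun KL _ b hb z hz hzr hz₂ P hP x y hx hy => ?_⟩⟩
  have hz₁ : |z.1| ≤ 2 := abs_le.2 hz.1
  obtain ⟨hxy, hyy, hxx, hyx⟩ := abs_second_pd_hpolyRem_le hb (abs_le.2 hx) (abs_le.2 hy)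
  obtain ⟨hβ, hα⟩ := abs_pd_hpolyRem_le hb hz₁ hz₂
  subst hP
  rw [pd2_gradient_combination, pd1_gradient_combination, pd2_hpoly0, pd1_hpoly0]
  have hlow := le_abs_perturbed hε hα hβ hz₂ hxy hyy
  have hup := abs_perturbed_le hε hα hβ hz₂ hxx hyx
  have hnorm : √(z.1 ^ 2 + z.2 ^ 2) ≤ 3 / 2 * |z.1| := Real.sqrt_le_iff.2
    ⟨by positivity, by nlinarith [sq_le_sq.2 hz₂, sq_abs z.1]⟩
  refine ⟨?_, by linarith⟩
  calc 1 / (4 * KL) = (2 * KL)⁻¹ / 2 := by ring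
    _ ≤ 3 / 4 * |z.1| := by linarith
    _ ≤ _ := hlow

/-- lower bounds on `∂₂P` for the auxiliary polynomial
`P(ξ,η) = ∂₁h₀(ξ,η)∂₂h₀(ζ̄) − ∂₂h₀(ξ,η)∂₁h₀(ζ̄)` on `[-4,4]²`. -/
theorem statement10 (d : ℕ) (hd : 3 ≤ d) :
    ∃ ε₀' > (0 : ℝ), ∀ ε₀ : ℝ, 0 < ε₀ → ε₀ ≤ ε₀' →
      ∃ K₀ : ℝ, ∀ KL : ℝ, K₀ ≤ KL →
        ∀ b : ℕ → ℕ → ℝ, CoeffSmall0 d ε₀ b →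
          ∀ z : ℝ × ℝ, z ∈ Set.Icc (-2 : ℝ) 2 ×ˢ Set.Icc (-2 : ℝ) 2 →
            (2 * KL)⁻¹ < Real.sqrt (z.1 ^ 2 + z.2 ^ 2) →
            |z.2| ≤ |z.1| →
            ∀ P : ℝ → ℝ → ℝ,
              P = (fun x y =>
                pd1 (hpoly0 d b) x y * pd2 (hpoly0 d b) z.1 z.2 -
                  pd2 (hpoly0 d b) x y * pd1 (hpoly0 d b) z.1 z.2) →
              ∀ x y : ℝ, x ∈ Set.Icc (-4 : ℝ) 4 → y ∈ Set.Icc (-4 : ℝ) 4 →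
                1 / (4 * KL) ≤ |pd2 P x y| ∧
                1 / 2 * |pd1 P x y| ≤ |pd2 P x y| :=
  statement10_general d
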